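/- Let Γ = SL₂(ℤ) act on L̂ = {(a,b,c,d) ∈ ℤ⁴ : 3 ∣ b, 3 ∣ c} by the twisted action, and let L̂₀ = {x ∈ L̂ : D(x) = 0}. Then L̂₀ is the disjoint union L̂₀ = {0} ⊔ ⨆_{m≥1} ⨆_{γ ∈ Γ/(Γ∩N)} {γ·(0,0,0,m)} ⊔ ⨆_{m≥1} ⨆_{0≤n<3m} ⨆_{γ ∈ Γ} {γ·(0,0,3m,n)}; that is, every nonzero x ∈ L̂₀ is either of the form γ·(0,0,0,m) for a unique integer m ≥ 1 and a unique coset γ(Γ∩N) ∈ Γ/(Γ∩N), or of the form γ·(0,0,3m,n) for a unique triple (m,n,γ) with m ≥ 1, 0 ≤ n < 3m, γ ∈ Γ, and never both. -/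

import Mathlib

/-!
A singular form has a double root in `ℙ¹(ℚ)`, which the Hessian covariant `H` locates: the
discriminant of `H` is `-3 D`, so either `H = ε (p u + r v)²` with `(p, r)` coprime, whose root
`(r, -p)` is the double root of the form, or `H = 0` and the form is a multiple of a cube.
Moving the double root to `(1, 0)` by `SL₂(ℤ)` turns the form into `(0, 0, c, d)`; then `-1` and
`n_k` normalise it to `(0, 0, 0, m)` or `(0, 0, 3m, n)` with `m ≥ 1`, `0 ≤ n < 3m`.
Uniqueness is a stabiliser computation: a matrix of determinant one that keeps `(1, 0)` a
double root of `c u v² + d v³` (`c ≠ 0`), or a triple root of `m v³`, is `±n_k`.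
-/

/-- The action of an integer 2×2 matrix `γ` on the coefficient vector `x = (a,b,c,d)` of the
integral binary cubic form `a u³ + b u²v + c uv² + d v³`, given by `(γ·f)(u,v) = f((u,v)·γ)`. -/
def cubicAct (g : Matrix (Fin 2) (Fin 2) ℤ) (x : Fin 4 → ℤ) : Fin 4 → ℤ :=
  ![x 0 * g 0 0 ^ 3 + x 1 * g 0 0 ^ 2 * g 0 1 + x 2 * g 0 0 * g 0 1 ^ 2 + x 3 * g 0 1 ^ 3,
    3 * x 0 * g 0 0 ^ 2 * g 1 0 + x 1 * (g 0 0 ^ 2 * g 1 1 + 2 * g 0 0 * g 0 1 * g 1 0)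
      + x 2 * (2 * g 0 0 * g 0 1 * g 1 1 + g 1 0 * g 0 1 ^ 2) + 3 * x 3 * g 0 1 ^ 2 * g 1 1,
    3 * x 0 * g 0 0 * g 1 0 ^ 2 + x 1 * (2 * g 0 0 * g 1 0 * g 1 1 + g 1 0 ^ 2 * g 0 1)
      + x 2 * (g 0 0 * g 1 1 ^ 2 + 2 * g 1 0 * g 0 1 * g 1 1) + 3 * x 3 * g 0 1 * g 1 1 ^ 2,
    x 0 * g 1 0 ^ 3 + x 1 * g 1 0 ^ 2 * g 1 1 + x 2 * g 1 0 * g 1 1 ^ 2 + x 3 * g 1 1 ^ 3]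

/-- The discriminant of the binary cubic form with coefficients `(a,b,c,d)`. -/
def cubicDisc (x : Fin 4 → ℤ) : ℤ :=
  x 1 ^ 2 * x 2 ^ 2 + 18 * x 0 * x 1 * x 2 * x 3 - 4 * x 0 * x 2 ^ 3 - 4 * x 1 ^ 3 * x 3
    - 27 * x 0 ^ 2 * x 3 ^ 2

/-- `x` is of type I : `x = γ·(0,0,0,m)` for some `m ≥ 1` and `γ ∈ SL₂(ℤ)`. -/
def TypeI (x : Fin 4 → ℤ) : Prop :=
  ∃ (m : ℤ) (γ : Matrix (Fin 2) (Fin 2) ℤ), 1 ≤ m ∧ γ.det = 1 ∧ x = cubicAct γ ![0, 0, 0, m]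

/-- `x` is of type II : `x = γ·(0,0,3m,n)` for some `m ≥ 1`, `0 ≤ n < 3m`, `γ ∈ SL₂(ℤ)`. -/
def TypeII (x : Fin 4 → ℤ) : Prop :=
  ∃ (m n : ℤ) (γ : Matrix (Fin 2) (Fin 2) ℤ),
    1 ≤ m ∧ 0 ≤ n ∧ n < 3 * m ∧ γ.det = 1 ∧ x = cubicAct γ ![0, 0, 3 * m, n]

open Matrix

section Action

variable (g h : Matrix (Fin 2) (Fin 2) ℤ) (x : Fin 4 → ℤ)

lemma cubicAct_mul : cubicAct g (cubicAct h x) = cubicAct (g * h) x := by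
  funext i
  fin_cases i <;> simp [cubicAct, Matrix.mul_apply, Fin.sum_univ_two] <;> ring

lemma cubicAct_one : cubicAct 1 x = x := by
  funext i
  fin_cases i <;> simp [cubicAct]

lemma cubicAct_neg_one : cubicAct (-1) x = -x := by
  funext i
  fin_cases i <;> simp [cubicAct]

lemma cubicAct_zero : cubicAct g 0 = 0 := by
  funext i
  fin_cases i <;> simp [cubicAct]

lemma cubicDisc_cubicAct : cubicDisc (cubicAct g x) = g.det ^ 6 * cubicDisc x := by
  simp [cubicDisc, cubicAct, det_fin_two]
  ring

variable {g}

lemma cubicAct_adjugate_cubicAct (hg : g.det = 1) : cubicAct g.adjugate (cubicAct g x) = x := by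
  rw [cubicAct_mul, adjugate_mul, hg, one_smul, cubicAct_one]

lemma det_adjugate_eq_one (hg : g.det = 1) : g.adjugate.det = 1 := by
  rw [det_adjugate, hg, one_pow]

lemma cubicAct_eq_zero_iff (hg : g.det = 1) : cubicAct g x = 0 ↔ x = 0 := by
  refine ⟨fun h => ?_, fun h => h ▸ cubicAct_zero g⟩
  rw [← cubicAct_adjugate_cubicAct x hg, h, cubicAct_zero]

lemma cubicAct_adjugate_mul_eq {γ γ' : Matrix (Fin 2) (Fin 2) ℤ} {y y' : Fin 4 → ℤ}
    (hγ : γ.det = 1) (h : cubicAct γ y = cubicAct γ' y') :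
    cubicAct (γ.adjugate * γ') y' = y := by
  rw [← cubicAct_mul, ← h, cubicAct_adjugate_cubicAct y hγ]

lemma det_adjugate_mul_eq_one {γ γ' : Matrix (Fin 2) (Fin 2) ℤ} (hγ : γ.det = 1)
    (hγ' : γ'.det = 1) : (γ.adjugate * γ').det = 1 := by
  rw [det_mul, det_adjugate_eq_one hγ, hγ', one_mul]

lemma mul_adjugate_mul_cancel {γ : Matrix (Fin 2) (Fin 2) ℤ} (hγ : γ.det = 1)
    (γ' : Matrix (Fin 2) (Fin 2) ℤ) : γ * (γ.adjugate * γ') = γ' := by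
  rw [← mul_assoc, mul_adjugate, hγ, one_smul, one_mul]

end Action

/-- The singular forms `L̂₀` in the dual lattice `L̂`. -/
def singularDualLattice : Set (Fin 4 → ℤ) :=
  {x | 3 ∣ x 1 ∧ 3 ∣ x 2 ∧ cubicDisc x = 0}

lemma cubicAct_mem_singularDualLattice (g : Matrix (Fin 2) (Fin 2) ℤ) {x : Fin 4 → ℤ}
    (hx : x ∈ singularDualLattice) : cubicAct g x ∈ singularDualLattice := by
  obtain ⟨⟨b, hb⟩, ⟨c, hc⟩, hD⟩ := hx
  refine ⟨?_, ?_, by rw [cubicDisc_cubicAct, hD, mul_zero]⟩ <;>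
    simp only [cubicAct, hb, hc, cons_val_one, cons_val_two, head_cons, tail_cons] <;>
    apply_rules [dvd_add, dvd_mul_of_dvd_left, dvd_mul_right, dvd_refl]

section NormalForms

variable {g : Matrix (Fin 2) (Fin 2) ℤ} {x : Fin 4 → ℤ}

lemma TypeI.cubicAct (hg : g.det = 1) : TypeI x → TypeI (cubicAct g x) := by
  rintro ⟨m, γ, hm, hγ, rfl⟩
  exact ⟨m, g * γ, hm, by rw [det_mul, hg, hγ, one_mul], cubicAct_mul g γ _⟩

lemma TypeII.cubicAct (hg : g.det = 1) : TypeII x → TypeII (cubicAct g x) := by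
  rintro ⟨m, n, γ, hm, hn, hnm, hγ, rfl⟩
  exact ⟨m, n, g * γ, hm, hn, hnm, by rw [det_mul, hg, hγ, one_mul], cubicAct_mul g γ _⟩

lemma typeI_of_ne_zero {d : ℤ} (hd : d ≠ 0) : TypeI ![0, 0, 0, d] := by
  rcases hd.lt_or_gt with hneg | hpos
  · refine ⟨-d, -1, by omega, by simp [det_neg], ?_⟩
    rw [cubicAct_neg_one]
    simp
  · exact ⟨d, 1, hpos, det_one, (cubicAct_one _).symm⟩

lemma cubicAct_unipotent (k c d : ℤ) :
    cubicAct !![1, 0; k, 1] ![0, 0, c, d] = ![0, 0, c, c * k + d] := by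
  funext i
  fin_cases i <;> simp [cubicAct]

lemma typeII_of_three_dvd {c : ℤ} (d : ℤ) (hc : 3 ∣ c) (hc0 : c ≠ 0) :
    TypeII ![0, 0, c, d] := by
  obtain ⟨m, rfl⟩ := hc
  wlog hm : 0 < m generalizing m d
  · have h := (this (-d) (-m) (by omega) (by omega)).cubicAct (g := -1) (by simp [det_neg])
    rw [cubicAct_neg_one] at h
    simpa using h
  refine ⟨m, d % (3 * m), !![1, 0; d / (3 * m), 1], hm, Int.emod_nonneg _ (by omega),
    Int.emod_lt_of_pos _ (by omega), by simp [det_fin_two_of], ?_⟩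
  rw [cubicAct_unipotent, Int.mul_ediv_add_emod]

end NormalForms

lemma Int.exists_coprime_of_sq_eq_mul {a b c : ℤ} (h : b ^ 2 = a * c) (ha : a ≠ 0) :
    ∃ ε p q : ℤ, ε ≠ 0 ∧ IsCoprime p q ∧ a = ε * p ^ 2 ∧ b = ε * p * q ∧ c = ε * q ^ 2 := by
  obtain ⟨g, p, q, hg, hpq, rfl, rfl⟩ := Int.exists_gcd_one' (Int.gcd_pos_of_ne_zero_left b ha)
  have hpq : IsCoprime p q := Int.isCoprime_iff_gcd_eq_one.mpr hpq
  have hg0 : (g : ℤ) ≠ 0 := by positivity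
  have hp0 : p ≠ 0 := left_ne_zero_of_mul ha
  have hgq : (g : ℤ) * q ^ 2 = p * c := mul_left_cancel₀ hg0 (by linear_combination h)
  obtain ⟨ε, hε⟩ : p ∣ g := hpq.pow_right.dvd_of_dvd_mul_right ⟨c, hgq⟩
  refine ⟨ε, p, q, right_ne_zero_of_mul (hε ▸ hg0), hpq, by rw [hε]; ring, by rw [hε]; ring, ?_⟩
  exact mul_left_cancel₀ hp0 (by linear_combination -hgq + q ^ 2 * hε)

lemma exists_coprime_of_discrim_eq_zero {q : Fin 3 → ℤ} (h : discrim (q 0) (q 1) (q 2) = 0)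
    (hq : q ≠ 0) : ∃ ε p r : ℤ, ε ≠ 0 ∧ IsCoprime p r ∧ q = ε • ![p ^ 2, 2 * p * r, r ^ 2] := by
  obtain ⟨k, hk⟩ : Even (q 1) := by
    refine (Int.even_pow.mp (⟨2 * (q 0 * q 2), ?_⟩ : Even (q 1 ^ 2))).1
    rw [discrim] at h
    linear_combination h
  have hk2 : k ^ 2 = q 0 * q 2 := by
    refine mul_left_cancel₀ four_ne_zero ?_
    rw [discrim, hk] at h
    linear_combination h
  by_cases h0 : q 0 = 0
  · have hk0 : k = 0 := by simpa [h0] using hk2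
    have h2 : q 2 ≠ 0 := fun h2 => hq (by funext i; fin_cases i <;> simp [h0, hk, hk0, h2])
    refine ⟨q 2, 0, 1, h2, isCoprime_zero_left.mpr isUnit_one, ?_⟩
    funext i
    fin_cases i <;> simp [h0, hk, hk0]
  · obtain ⟨ε, p, r, hε, hpr, h0, h1, h2⟩ := Int.exists_coprime_of_sq_eq_mul hk2 h0
    refine ⟨ε, p, r, hε, hpr, ?_⟩
    funext i
    fin_cases i <;> simp [hk, h0, h1, h2]
    ring

/-- `-1/4` times the classical Hessian `f_uu f_vv - f_uv²` of the cubic form `x`. -/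
def cubicHessian (x : Fin 4 → ℤ) : Fin 3 → ℤ :=
  ![x 1 ^ 2 - 3 * x 0 * x 2, x 1 * x 2 - 9 * x 0 * x 3, x 2 ^ 2 - 3 * x 1 * x 3]

/-- The twisted action of `g` on the binary quadratic form `q 0 u² + q 1 uv + q 2 v²`. -/
def quadAct (g : Matrix (Fin 2) (Fin 2) ℤ) (q : Fin 3 → ℤ) : Fin 3 → ℤ :=
  ![q 0 * g 0 0 ^ 2 + q 1 * g 0 0 * g 0 1 + q 2 * g 0 1 ^ 2,
    2 * q 0 * g 0 0 * g 1 0 + q 1 * (g 0 0 * g 1 1 + g 0 1 * g 1 0) + 2 * q 2 * g 0 1 * g 1 1,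
    q 0 * g 1 0 ^ 2 + q 1 * g 1 0 * g 1 1 + q 2 * g 1 1 ^ 2]

section Hessian

variable {x : Fin 4 → ℤ}

lemma cubicHessian_cubicAct (g : Matrix (Fin 2) (Fin 2) ℤ) (x : Fin 4 → ℤ) :
    cubicHessian (cubicAct g x) = g.det ^ 2 • quadAct g (cubicHessian x) := by
  funext i
  fin_cases i <;> simp [cubicHessian, cubicAct, quadAct, det_fin_two] <;> ring

lemma discrim_cubicHessian (x : Fin 4 → ℤ) :
    discrim (cubicHessian x 0) (cubicHessian x 1) (cubicHessian x 2) = -3 * cubicDisc x := by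
  simp [discrim, cubicHessian, cubicDisc]
  ring

lemma apply_zero_eq_zero_of_cubicHessian (h0 : cubicHessian x 0 = 0) (h1 : cubicHessian x 1 = 0)
    (h2 : cubicHessian x 2 ≠ 0) : x 0 = 0 ∧ x 1 = 0 := by
  simp only [cubicHessian, cons_val_zero, cons_val_one, cons_val_two, head_cons, tail_cons]
    at h0 h1 h2
  have hx0 : x 0 = 0 := by
    have : 3 * x 0 * (x 2 ^ 2 - 3 * x 1 * x 3) = 0 := by
      linear_combination x 1 * h1 - x 2 * h0
    simpa [h2] using this
  exact ⟨hx0, pow_eq_zero_iff two_ne_zero |>.mp (by linear_combination h0 + 3 * x 2 * hx0)⟩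

/-- When the Hessian is `ε (p u + r v)²` with `ε ≠ 0`, moving its root `(r, -p)` to `(1, 0)` turns
the Hessian into `ε v²`. -/
lemma exists_cubicAct_apply_eq_zero_of_cubicHessian_ne_zero (hD : cubicDisc x = 0)
    (hH : cubicHessian x ≠ 0) :
    ∃ δ : Matrix (Fin 2) (Fin 2) ℤ, δ.det = 1 ∧ cubicAct δ x 0 = 0 ∧ cubicAct δ x 1 = 0 := by
  obtain ⟨ε, p, r, hε, ⟨u, v, huv⟩, hεpr⟩ :=
    exists_coprime_of_discrim_eq_zero (by rw [discrim_cubicHessian, hD, mul_zero]) hH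
  have hδ : (!![r, -p; u, v] : Matrix (Fin 2) (Fin 2) ℤ).det = 1 := by
    rw [det_fin_two_of]; linear_combination huv
  refine ⟨_, hδ, apply_zero_eq_zero_of_cubicHessian ?_ ?_ ?_⟩ <;>
    simp only [cubicHessian_cubicAct, hδ, hεpr, quadAct] <;> simp
  · ring
  · ring
  · intro h
    exact hε (by linear_combination h - ε * (u * p + v * r + 1) * huv)

/-- A vanishing Hessian makes `x` a rational multiple of a cube `(p u + r v)³`. -/
lemma exists_cubicAct_apply_eq_zero_of_cubicHessian_eq_zero (hb : 3 ∣ x 1) (hc : 3 ∣ x 2)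
    (hH : cubicHessian x = 0) :
    ∃ δ : Matrix (Fin 2) (Fin 2) ℤ, δ.det = 1 ∧ cubicAct δ x 0 = 0 ∧ cubicAct δ x 1 = 0 := by
  obtain ⟨B, hB⟩ := hb
  obtain ⟨C, hC⟩ := hc
  have hH0 := congrFun hH 0
  have hH1 := congrFun hH 1
  simp only [cubicHessian, hB, hC, cons_val_zero, cons_val_one, Pi.zero_apply]
    at hH0 hH1
  have hBC : B ^ 2 = x 0 * C :=
    mul_left_cancel₀ (by norm_num : (9 : ℤ) ≠ 0) (by linear_combination hH0)
  have hBCd : B * C = x 0 * x 3 :=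
    mul_left_cancel₀ (by norm_num : (9 : ℤ) ≠ 0) (by linear_combination hH1)
  by_cases ha : x 0 = 0
  · have hB0 : B = 0 := pow_eq_zero_iff two_ne_zero |>.mp (by rw [hBC, ha, zero_mul])
    exact ⟨1, det_one, by rw [cubicAct_one, ha], by rw [cubicAct_one, hB, hB0, mul_zero]⟩
  obtain ⟨ε, p, r, hε, ⟨u, v, huv⟩, h0, h1, h2⟩ := Int.exists_coprime_of_sq_eq_mul hBC ha
  have hp : p ≠ 0 := by rintro rfl; simp [h0] at ha
  have hd : p * x 3 = ε * r ^ 3 := by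
    refine mul_left_cancel₀ (mul_ne_zero hε hp) ?_
    rw [h0, h1, h2] at hBCd
    linear_combination -hBCd
  have hδ : (!![r, -p; u, v] : Matrix (Fin 2) (Fin 2) ℤ).det = 1 := by
    rw [det_fin_two_of]; linear_combination huv
  refine ⟨_, hδ, ?_, ?_⟩ <;> simp [cubicAct, hB, hC, h0, h1, h2]
  · linear_combination (-p ^ 2) * hd
  · linear_combination 3 * p * v * hd

lemma exists_cubicAct_apply_eq_zero (hx : x ∈ singularDualLattice) :
    ∃ δ : Matrix (Fin 2) (Fin 2) ℤ, δ.det = 1 ∧ cubicAct δ x 0 = 0 ∧ cubicAct δ x 1 = 0 := by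
  obtain ⟨hb, hc, hD⟩ := hx
  by_cases hH : cubicHessian x = 0
  · exact exists_cubicAct_apply_eq_zero_of_cubicHessian_eq_zero hb hc hH
  · exact exists_cubicAct_apply_eq_zero_of_cubicHessian_ne_zero hD hH

end Hessian

lemma typeI_or_typeII_of_mem_singularDualLattice {x : Fin 4 → ℤ} (hx : x ∈ singularDualLattice)
    (hx0 : x ≠ 0) : TypeI x ∨ TypeII x := by
  obtain ⟨δ, hδ, h0, h1⟩ := exists_cubicAct_apply_eq_zero hx
  set y := cubicAct δ x with hy
  have hy_eq : y = ![0, 0, y 2, y 3] := by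
    funext i
    fin_cases i <;> simp [h0, h1]
  have hy0 : y ≠ 0 := by rwa [hy, Ne, cubicAct_eq_zero_iff x hδ]
  have hxy : x = cubicAct δ.adjugate y := (cubicAct_adjugate_cubicAct x hδ).symm
  have h3 : 3 ∣ y 2 := (cubicAct_mem_singularDualLattice δ hx).2.1
  rw [hxy, hy_eq]
  by_cases hy2 : y 2 = 0
  · rw [hy2]
    refine .inl (.cubicAct (det_adjugate_eq_one hδ) (typeI_of_ne_zero fun hy3 => hy0 ?_))
    rw [hy_eq, hy2, hy3]
    simp
  · exact .inr (.cubicAct (det_adjugate_eq_one hδ) (typeII_of_three_dvd _ h3 hy2))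

section Stabilizers

variable {δ : Matrix (Fin 2) (Fin 2) ℤ}

/-- `(δ 0 0, δ 0 1)` is a double root of `c u v² + d v³`, whose only double root is `(1, 0)`. -/
lemma apply_zero_one_eq_zero_of_cubicAct (hδ : δ.det = 1) {c d : ℤ} (hc : c ≠ 0)
    (h0 : cubicAct δ ![0, 0, c, d] 0 = 0) (h1 : cubicAct δ ![0, 0, c, d] 1 = 0) : δ 0 1 = 0 := by
  simp [cubicAct] at h0 h1
  rw [det_fin_two] at hδ
  have : c * δ 0 1 ^ 2 = 0 := by
    linear_combination 3 * δ 1 1 * h0 - δ 0 1 * h1 - c * δ 0 1 ^ 2 * hδ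
  simpa [hc] using this

lemma exists_eq_unipotent_or_neg_unipotent (hδ : δ.det = 1) (h : δ 0 1 = 0) :
    ∃ t, δ = !![1, 0; t, 1] ∨ δ = !![-1, 0; t, -1] := by
  rw [det_fin_two, h, zero_mul, sub_zero] at hδ
  refine ⟨δ 1 0, ?_⟩
  rcases Int.eq_one_or_neg_one_of_mul_eq_one' hδ with ⟨h0, h1⟩ | ⟨h0, h1⟩ <;>
    [left; right] <;> ext i j <;> fin_cases i <;> fin_cases j <;> simp [h0, h1, h]

lemma cubicAct_typeII_ne_typeI (hδ : δ.det = 1) {m' n' m : ℤ} (hm' : m' ≠ 0) :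
    cubicAct δ ![0, 0, 3 * m', n'] ≠ ![0, 0, 0, m] := by
  intro h
  have h01 := apply_zero_one_eq_zero_of_cubicAct hδ (by omega) (congrFun h 0) (congrFun h 1)
  obtain ⟨t, rfl | rfl⟩ := exists_eq_unipotent_or_neg_unipotent hδ h01 <;>
    simpa [cubicAct, hm'] using congrFun h 2

lemma eq_of_cubicAct_typeI_eq (hδ : δ.det = 1) {m' m : ℤ} (hm' : 0 < m') (hm : 0 < m)
    (h : cubicAct δ ![0, 0, 0, m'] = ![0, 0, 0, m]) : m = m' ∧ δ = !![1, 0; δ 1 0, 1] := by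
  have h01 : δ 0 1 = 0 := by simpa [cubicAct, hm'.ne'] using congrFun h 0
  have h3 := congrFun h 3
  obtain ⟨t, rfl | rfl⟩ := exists_eq_unipotent_or_neg_unipotent hδ h01 <;> simp [cubicAct] at h3
  · exact ⟨h3.symm, rfl⟩
  · omega

lemma eq_of_cubicAct_typeII_eq (hδ : δ.det = 1) {m' n' m n : ℤ} (hm' : 0 < m') (hn' : 0 ≤ n')
    (hnm' : n' < 3 * m') (hm : 0 < m) (hn : 0 ≤ n) (hnm : n < 3 * m)
    (h : cubicAct δ ![0, 0, 3 * m', n'] = ![0, 0, 3 * m, n]) : m = m' ∧ n = n' ∧ δ = 1 := by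
  have h01 := apply_zero_one_eq_zero_of_cubicAct hδ (by omega) (congrFun h 0) (congrFun h 1)
  have h2 := congrFun h 2
  have h3 := congrFun h 3
  obtain ⟨t, rfl | rfl⟩ := exists_eq_unipotent_or_neg_unipotent hδ h01 <;>
    simp [cubicAct] at h2 h3
  · have ht : t = 0 := by nlinarith
    subst ht
    refine ⟨by omega, by omega, ?_⟩
    ext i j; fin_cases i <;> fin_cases j <;> rfl
  · omega

end Stabilizers

lemma TypeI.mem_singularDualLattice {x : Fin 4 → ℤ} : TypeI x → x ∈ singularDualLattice := by
  rintro ⟨m, γ, -, -, rfl⟩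
  exact cubicAct_mem_singularDualLattice γ (by simp [singularDualLattice, cubicDisc])

lemma TypeII.mem_singularDualLattice {x : Fin 4 → ℤ} : TypeII x → x ∈ singularDualLattice := by
  rintro ⟨m, n, γ, -, -, -, -, rfl⟩
  exact cubicAct_mem_singularDualLattice γ (by simp [singularDualLattice, cubicDisc])

lemma TypeI.ne_zero {x : Fin 4 → ℤ} : TypeI x → x ≠ 0 := by
  rintro ⟨m, γ, hm, hγ, rfl⟩ h
  rw [cubicAct_eq_zero_iff _ hγ] at h
  simpa [show m ≠ 0 by omega] using congrFun h 3

lemma TypeII.ne_zero {x : Fin 4 → ℤ} : TypeII x → x ≠ 0 := by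
  rintro ⟨m, n, γ, hm, -, -, hγ, rfl⟩ h
  rw [cubicAct_eq_zero_iff _ hγ] at h
  simpa [show m ≠ 0 by omega] using congrFun h 2

/-- Shintani's description of the singular dual forms: `L̂₀ = {x ∈ L̂ : D(x) = 0}` is the
disjoint union of `{0}`, the forms `γ·(0,0,0,m)` (with `m ≥ 1` unique and `γ` unique modulo
`Γ ∩ N`), and the forms `γ·(0,0,3m,n)` (with the triple `(m,n,γ)`, `m ≥ 1`, `0 ≤ n < 3m`,
unique). -/
theorem singular_dual_lattice_description :
    (∀ x : Fin 4 → ℤ,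
      ((3 : ℤ) ∣ x 1 ∧ (3 : ℤ) ∣ x 2 ∧ cubicDisc x = 0) ↔ (x = 0 ∨ TypeI x ∨ TypeII x)) ∧
    (∀ x : Fin 4 → ℤ, TypeI x → x ≠ 0) ∧
    (∀ x : Fin 4 → ℤ, TypeII x → x ≠ 0) ∧
    (∀ x : Fin 4 → ℤ, ¬(TypeI x ∧ TypeII x)) ∧
    (∀ (m m' : ℤ) (γ γ' : Matrix (Fin 2) (Fin 2) ℤ),
      1 ≤ m → 1 ≤ m' → γ.det = 1 → γ'.det = 1 →
      cubicAct γ ![0, 0, 0, m] = cubicAct γ' ![0, 0, 0, m'] →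
      m = m' ∧ ∃ k : ℤ, γ' = γ * !![1, 0; k, 1]) ∧
    (∀ (m n m' n' : ℤ) (γ γ' : Matrix (Fin 2) (Fin 2) ℤ),
      1 ≤ m → 0 ≤ n → n < 3 * m → γ.det = 1 →
      1 ≤ m' → 0 ≤ n' → n' < 3 * m' → γ'.det = 1 →
      cubicAct γ ![0, 0, 3 * m, n] = cubicAct γ' ![0, 0, 3 * m', n'] →
      m = m' ∧ n = n' ∧ γ = γ') := by
  refine ⟨fun x => ⟨fun hx => ?_, ?_⟩, fun _ => TypeI.ne_zero, fun _ => TypeII.ne_zero, ?_, ?_, ?_⟩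
  · by_cases hx0 : x = 0
    · exact .inl hx0
    · exact .inr (typeI_or_typeII_of_mem_singularDualLattice hx hx0)
  · rintro (rfl | h | h)
    · simp [cubicDisc]
    · exact h.mem_singularDualLattice
    · exact h.mem_singularDualLattice
  · rintro x ⟨⟨m, γ, -, hγ, rfl⟩, ⟨m', n', γ', hm', -, -, hγ', h⟩⟩
    exact cubicAct_typeII_ne_typeI (det_adjugate_mul_eq_one hγ hγ') (by omega)
      (cubicAct_adjugate_mul_eq hγ h)
  · intro m m' γ γ' hm hm' hγ hγ' h
    obtain ⟨rfl, hδ⟩ := eq_of_cubicAct_typeI_eq (det_adjugate_mul_eq_one hγ hγ') hm' hm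
      (cubicAct_adjugate_mul_eq hγ h)
    exact ⟨rfl, _, by rw [← hδ, mul_adjugate_mul_cancel hγ]⟩
  · intro m n m' n' γ γ' hm hn hnm hγ hm' hn' hnm' hγ' h
    obtain ⟨rfl, rfl, hδ⟩ := eq_of_cubicAct_typeII_eq (det_adjugate_mul_eq_one hγ hγ') hm' hn'
      hnm' hm hn hnm (cubicAct_adjugate_mul_eq hγ h)
    refine ⟨rfl, rfl, ?_⟩
    rw [← mul_adjugate_mul_cancel hγ γ', hδ, mul_one]
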